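/- Let (x_n)_{n∈ℕ} be a sequence in ℝ^d and (T_k)_{k∈ℕ} a strictly increasing sequence of natural numbers with T₀ = 0; set L_k = T_{k+1} − T_k, λ̃_k(x) = x_{T_k}, and let the k-th excursion be the sequence Ẽ^{(k)}(x)_m = x_{T_k + m} − x_{T_k} for 0 ≤ m ≤ L_k. Then for every n ∈ ℕ and all 1 ≤ i,j ≤ d, the discrete signed area decomposes along excursions as A^{ij}_{T_n}(x) = Σ_{p=0}^{n−1} A^{ij}_{L_p}(Ẽ^{(p)}(x)) + A^{ij}_n(λ̃(x)). -/

import Mathlib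

/-- The discrete signed area of a sequence `x : ℕ → ℝ^d`:
`A^{ij}_n(x) = Σ_{1≤k<l≤n} ((Δx^{(i)})_k (Δx^{(j)})_l − (Δx^{(j)})_k (Δx^{(i)})_l)`. -/
def discreteArea {d : ℕ} (x : ℕ → Fin d → ℝ) (i j : Fin d) (n : ℕ) : ℝ :=
  ∑ k ∈ Finset.Icc 1 n, ∑ l ∈ Finset.Icc (k + 1) n,
    ((x k i - x (k - 1) i) * (x l j - x (l - 1) j) -
      (x k j - x (k - 1) j) * (x l i - x (l - 1) i))

/-!
Cutting a path at time `m ≤ n` changes its signed area only by a cross term: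
`A_n(x) = A_m(x) + A_{n-m}(x_{m+·} - x_m) + (x_m - x_0) ∧ (x_n - x_m)`,
which follows by induction on `n - m` from the one-step recursion
`A_{n+1}(x) = A_n(x) + (x_n - x_0) ∧ (x_{n+1} - x_n)`.
Cutting successively at `T_0 = 0 < T_1 < ⋯`, the cross terms
`(x_{T_p} - x_{T_0}) ∧ (x_{T_{p+1}} - x_{T_p})` are exactly the one-step increments of `A(λ̃)`.
-/

open Finset

theorem Finset.sum_Icc_one_sub_pred {G : Type*} [AddCommGroup G] (f : ℕ → G) (n : ℕ) :
    ∑ k ∈ Icc 1 n, (f k - f (k - 1)) = f n - f 0 := by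
  induction n with
  | zero => simp
  | succ n ih => rw [sum_Icc_succ_top (by omega), ih, Nat.add_sub_cancel]; abel

def wedgeCoord {d : ℕ} (u v : Fin d → ℝ) (i j : Fin d) : ℝ :=
  u i * v j - u j * v i

theorem sum_wedgeCoord_left {d : ℕ} {ι : Type*} (s : Finset ι) (u : ι → Fin d → ℝ)
    (v : Fin d → ℝ) (i j : Fin d) :
    ∑ k ∈ s, wedgeCoord (u k) v i j = wedgeCoord (∑ k ∈ s, u k) v i j := by
  simp only [wedgeCoord, Finset.sum_apply, sum_sub_distrib, sum_mul]

namespace discreteArea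

variable {d : ℕ} (x : ℕ → Fin d → ℝ) (i j : Fin d)

theorem eq_sum_wedgeCoord (n : ℕ) :
    discreteArea x i j n =
      ∑ k ∈ Icc 1 n, ∑ l ∈ Icc (k + 1) n, wedgeCoord (x k - x (k - 1)) (x l - x (l - 1)) i j :=
  rfl

@[simp]
theorem zero : discreteArea x i j 0 = 0 := rfl

theorem succ (n : ℕ) :
    discreteArea x i j (n + 1) =
      discreteArea x i j n + wedgeCoord (x n - x 0) (x (n + 1) - x n) i j := by
  have split_last : ∀ k ∈ Icc 1 n,
      ∑ l ∈ Icc (k + 1) (n + 1), wedgeCoord (x k - x (k - 1)) (x l - x (l - 1)) i j =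
        ∑ l ∈ Icc (k + 1) n, wedgeCoord (x k - x (k - 1)) (x l - x (l - 1)) i j +
          wedgeCoord (x k - x (k - 1)) (x (n + 1) - x n) i j := fun k hk => by
    rw [sum_Icc_succ_top (by simp at hk; omega), Nat.add_sub_cancel]
  rw [eq_sum_wedgeCoord, eq_sum_wedgeCoord, sum_Icc_succ_top (by omega),
    Icc_eq_empty_of_lt (Nat.lt_succ_self _), sum_empty, add_zero, sum_congr rfl split_last,
    sum_add_distrib, sum_wedgeCoord_left, sum_Icc_one_sub_pred]

theorem add (m k : ℕ) :
    discreteArea x i j (m + k) =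
      discreteArea x i j m + discreteArea (fun t => x (m + t) - x m) i j k +
        wedgeCoord (x m - x 0) (x (m + k) - x m) i j := by
  induction k with
  | zero => simp [wedgeCoord]
  | succ k ih =>
    rw [← add_assoc, succ, ih, succ]
    simp only [wedgeCoord, Pi.sub_apply, Pi.zero_apply, add_zero, sub_self, sub_zero,
      ← add_assoc]
    ring

theorem eq_add_sub {m n : ℕ} (h : m ≤ n) :
    discreteArea x i j n =
      discreteArea x i j m + discreteArea (fun t => x (m + t) - x m) i j (n - m) +
        wedgeCoord (x m - x 0) (x n - x m) i j := by
  obtain ⟨k, rfl⟩ := Nat.exists_eq_add_of_le h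
  rw [Nat.add_sub_cancel_left, add]

end discreteArea

/-- Decomposition of the discrete signed area along excursions: if
`(T_k)` is strictly increasing with `T₀ = 0`, `L_k = T_{k+1} − T_k`, `λ̃_k(x) = x_{T_k}`
and `Ẽ^{(k)}(x)_m = x_{T_k+m} − x_{T_k}`, then
`A^{ij}_{T_n}(x) = Σ_{p<n} A^{ij}_{L_p}(Ẽ^{(p)}(x)) + A^{ij}_n(λ̃(x))`. -/
theorem discreteArea_decomposition_along_excursions
    {d : ℕ} (x : ℕ → Fin d → ℝ) (T : ℕ → ℕ)
    (hT0 : T 0 = 0) (hTmono : StrictMono T) :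
    ∀ (n : ℕ) (i j : Fin d),
      discreteArea x i j (T n) =
        (∑ p ∈ Finset.range n,
            discreteArea (fun m => x (T p + m) - x (T p)) i j (T (p + 1) - T p)) +
          discreteArea (fun k => x (T k)) i j n := by
  intro n i j
  induction n with
  | zero => simp [hT0]
  | succ n ih =>
    rw [discreteArea.eq_add_sub x i j (hTmono n.lt_succ_self).le, ih, sum_range_succ,
      discreteArea.succ, hT0]
    ring
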